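/- arXiv:2305.01522 — 3 statements merged into one kernel-verified Lean document; each statement's English description precedes it below -/
import Mathlib

section
/- Under the position-based click model, suppose that for every query q the click indicators c(d) for distinct documents d ∈ D_q are pairwise uncorrelated given q (with y ∼ π₀(·|q)). Then the variance of the exposure-based IPS estimator, computed as the average over queries of the per-query conditional variance, is upper-bounded by the exposure-based divergence: (1/N) · E_q[ Var_{y,c}[ Σ_{d∈D_q} (ρ(d)/ρ₀(d)) · c(d) | q ] ] ≤ (Z/N) · d₂(ρ‖ρ₀). -/
open Finset

noncomputable section

/-- Expectation of `f` under a (finitely supported) distribution `μ`. -/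
def expect {Ω : Type*} [Fintype Ω] (μ : Ω → ℝ) (f : Ω → ℝ) : ℝ := ∑ ω, μ ω * f ω

/-- Variance of `f` under a (finitely supported) distribution `μ`. -/
def variance {Ω : Type*} [Fintype Ω] (μ : Ω → ℝ) (f : Ω → ℝ) : ℝ :=
  expect μ fun ω => (f ω - expect μ f) ^ 2

/-- Examination probability that document `d` receives under ranking `y`
(an injective assignment of `K` documents of the candidate set to positions `1,…,K`);
documents not placed at any of the top-`K` positions get examination probability `0`. -/
def exam {Doc : Type*} [DecidableEq Doc] {Dq : Finset Doc} {K : ℕ}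
    (E : Fin K → ℝ) (y : Fin K ↪ {x : Doc // x ∈ Dq}) (d : {x : Doc // x ∈ Dq}) : ℝ :=
  ∑ k : Fin K, if y k = d then E k else 0

/-- Expected exposure `ρ(d)` of document `d` under a ranking policy `π`. -/
def expExposure {Doc : Type*} [DecidableEq Doc] {Dq : Finset Doc} {K : ℕ}
    (E : Fin K → ℝ) (π : (Fin K ↪ {x : Doc // x ∈ Dq}) → ℝ)
    (d : {x : Doc // x ∈ Dq}) : ℝ :=
  ∑ y : Fin K ↪ {x : Doc // x ∈ Dq}, π y * exam E y d

/-- Real-valued click indicator. -/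
def ind (b : Bool) : ℝ := if b then 1 else 0

lemma ind_sq (b : Bool) : ind b * ind b = ind b := by unfold ind; cases b <;> simp

lemma expect_sum {Ω ι : Type*} [Fintype Ω] [Fintype ι] (μ : Ω → ℝ) (h : ι → Ω → ℝ) :
    expect μ (fun ω => ∑ d, h d ω) = ∑ d, expect μ (h d) := by
  unfold _root_.expect; simp_rw [Finset.mul_sum]; rw [Finset.sum_comm]

lemma expect_const_mul {Ω : Type*} [Fintype Ω] (μ : Ω → ℝ) (c : ℝ) (f : Ω → ℝ) :
    expect μ (fun ω => c * f ω) = c * expect μ f := by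
  unfold _root_.expect; simp_rw [mul_left_comm _ c, ← Finset.mul_sum]

lemma variance_eq {Ω : Type*} [Fintype Ω] (μ : Ω → ℝ) (hμ1 : ∑ ω, μ ω = 1) (f : Ω → ℝ) :
    variance μ f = expect μ (fun ω => f ω * f ω) - expect μ f * expect μ f := by
  unfold variance _root_.expect
  set m := ∑ ω, μ ω * f ω with hm
  have h : ∀ ω : Ω, μ ω * (f ω - m) ^ 2
      = μ ω * (f ω * f ω) - 2 * m * (μ ω * f ω) + m * m * μ ω := by intro ω; ring
  rw [Finset.sum_congr rfl (fun ω _ => h ω), Finset.sum_add_distrib, Finset.sum_sub_distrib,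
    ← Finset.mul_sum, ← Finset.mul_sum, hμ1]
  ring

lemma var_sum_bound {Ω : Type*} [Fintype Ω] (μ : Ω → ℝ) (hμ0 : ∀ ω, 0 ≤ μ ω)
    (hμ1 : ∑ ω, μ ω = 1) {ι : Type*} [Fintype ι] (w : ι → ℝ) (g : ι → Ω → Bool)
    (huncor : ∀ d d', d ≠ d' → expect μ (fun ω => ind (g d ω) * ind (g d' ω))
       = expect μ (fun ω => ind (g d ω)) * expect μ (fun ω => ind (g d' ω))) :
    variance μ (fun ω => ∑ d, w d * ind (g d ω))
      ≤ ∑ d, w d ^ 2 * expect μ (fun ω => ind (g d ω)) := by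
  rw [variance_eq μ hμ1]
  have hEf : expect μ (fun ω => ∑ d, w d * ind (g d ω))
      = ∑ d, w d * expect μ (fun ω => ind (g d ω)) := by
    rw [expect_sum]; exact Finset.sum_congr rfl fun d _ => expect_const_mul μ _ _
  have hEf2 : expect μ (fun ω => (∑ d, w d * ind (g d ω)) * (∑ d, w d * ind (g d ω)))
      = ∑ d, ∑ d', (w d * w d') * expect μ (fun ω => ind (g d ω) * ind (g d' ω)) := by
    have : (fun ω => (∑ d, w d * ind (g d ω)) * (∑ d, w d * ind (g d ω)))
        = fun ω => ∑ d, ∑ d', (w d * w d') * (ind (g d ω) * ind (g d' ω)) := by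
      funext ω; rw [Finset.sum_mul_sum]; exact Finset.sum_congr rfl fun d _ =>
        Finset.sum_congr rfl fun d' _ => by ring
    rw [this, expect_sum]
    exact Finset.sum_congr rfl fun d _ => by
      rw [expect_sum]; exact Finset.sum_congr rfl fun d' _ => expect_const_mul μ _ _
  rw [hEf2, hEf, Finset.sum_mul_sum]
  rw [← Finset.sum_sub_distrib]
  apply Finset.sum_le_sum
  intro d _
  rw [← Finset.sum_sub_distrib]
  have hdiag : ∀ d' ∈ Finset.univ, d' ≠ d →
      (w d * w d') * expect μ (fun ω => ind (g d ω) * ind (g d' ω))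
        - (w d * expect μ (fun ω => ind (g d ω))) * (w d' * expect μ (fun ω => ind (g d' ω))) = 0 := by
    intro d' _ hne
    rw [huncor d d' (Ne.symm hne)]; ring
  rw [Finset.sum_eq_single d hdiag (by simp)]
  have h1 : expect μ (fun ω => ind (g d ω) * ind (g d ω)) = expect μ (fun ω => ind (g d ω)) := by
    unfold _root_.expect; exact Finset.sum_congr rfl fun ω _ => by simp only []; rw [ind_sq]
  rw [h1]
  have h2 : 0 ≤ expect μ (fun ω => ind (g d ω)) * expect μ (fun ω => ind (g d ω)) :=
    mul_self_nonneg _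
  nlinarith [sq_nonneg (w d)]

/-- under the position-based click model, if for every query `q` the click
indicators of distinct documents are pairwise uncorrelated given `q` (with `y ∼ π₀(·|q)`),
then the variance of the exposure-based IPS estimator — computed as the average over
queries of the per-query conditional variance — is upper-bounded by the exposure-based
divergence:
`(1/N) · E_q[ Var_{y,c}[ ∑_{d∈D_q} (ρ(d)/ρ₀(d))·c(d) | q ] ] ≤ (Z/N) · d₂(ρ‖ρ₀)`,
where `Z = ∑_{k=1}^K P(E=1|k)`, `ρ'(d) = ρ(d)/Z`, `ρ₀'(d) = ρ₀(d)/Z` and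
`d₂(ρ‖ρ₀) = E_q[ ∑_{d∈D_q} ρ₀'(d)·(ρ'(d)/ρ₀'(d))² ]`. -/
theorem ips_variance_bounded_by_exposure_divergence
    {Doc : Type*} [DecidableEq Doc]
    {Q : Type*} [Fintype Q]
    -- distribution over queries
    (Pq : Q → ℝ) (hPq0 : ∀ q, 0 ≤ Pq q) (hPq1 : ∑ q, Pq q = 1)
    -- candidate document sets
    (D : Q → Finset Doc) (K : ℕ)
    (E : Fin K → ℝ) (hE : ∀ k, 0 ≤ E k ∧ E k ≤ 1)
    (rel : ∀ q : Q, {x : Doc // x ∈ D q} → ℝ)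
    (hrel : ∀ q d, 0 ≤ rel q d ∧ rel q d ≤ 1)
    -- the new policy and the logging policy
    (π π₀ : ∀ q : Q, (Fin K ↪ {x : Doc // x ∈ D q}) → ℝ)
    (hπ0 : ∀ q y, 0 ≤ π q y) (hπ1 : ∀ q, ∑ y, π q y = 1)
    (hπ₀0 : ∀ q y, 0 ≤ π₀ q y) (hπ₀1 : ∀ q, ∑ y, π₀ q y = 1)
    -- strictly positive logging exposure
    (hρ₀pos : ∀ q d, 0 < expExposure E (π₀ q) d)
    -- per-query joint distribution of the displayed ranking and the clicks
    (μ : ∀ q : Q, ((Fin K ↪ {x : Doc // x ∈ D q}) × ({x : Doc // x ∈ D q} → Bool)) → ℝ)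
    (hμ0 : ∀ q ω, 0 ≤ μ q ω) (hμ1 : ∀ q, ∑ ω, μ q ω = 1)
    -- the ranking-marginal of the joint distribution is the logging policy `π₀`
    (hmarg : ∀ q y, ∑ c : {x : Doc // x ∈ D q} → Bool, μ q (y, c) = π₀ q y)
    -- position-based click model: conditionally on the displayed ranking `y`, document `d`
    -- is clicked with probability `P(E=1|rank(d|y)) · P(R=1|d,q)`
    (hclick : ∀ q d y, ∑ c : {x : Doc // x ∈ D q} → Bool, μ q (y, c) * ind (c d)
        = π₀ q y * (exam E y d * rel q d))
    -- the click indicators of distinct documents are pairwise uncorrelated given `q`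
    (huncor : ∀ q, ∀ d d' : {x : Doc // x ∈ D q}, d ≠ d' →
        expect (μ q) (fun ω => ind (ω.2 d) * ind (ω.2 d'))
          = expect (μ q) (fun ω => ind (ω.2 d)) * expect (μ q) (fun ω => ind (ω.2 d')))
    -- number of logged interactions
    (N : ℕ) (hN : 1 ≤ N) :
    (1 / (N : ℝ)) *
        ∑ q, Pq q *
          variance (μ q) (fun ω => ∑ d : {x : Doc // x ∈ D q},
            (expExposure E (π q) d / expExposure E (π₀ q) d) * ind (ω.2 d))
      ≤ ((∑ k : Fin K, E k) / (N : ℝ)) *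
          ∑ q, Pq q *
            ∑ d : {x : Doc // x ∈ D q},
              (expExposure E (π₀ q) d / ∑ k : Fin K, E k) *
                ((expExposure E (π q) d / ∑ k : Fin K, E k) /
                  (expExposure E (π₀ q) d / ∑ k : Fin K, E k)) ^ 2 := by
  
  set Z := ∑ k : Fin K, E k with hZdef
  have hZ0 : 0 ≤ Z := Finset.sum_nonneg fun k _ => (hE k).1
  have hEind : ∀ q (d : {x : Doc // x ∈ D q}),
      _root_.expect (μ q) (fun ω => ind (ω.2 d)) = expExposure E (π₀ q) d * rel q d := by
    intro q d
    unfold _root_.expect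
    rw [Fintype.sum_prod_type]
    calc ∑ y, ∑ c : {x : Doc // x ∈ D q} → Bool, μ q (y, c) * ind (c d)
        = ∑ y, π₀ q y * (exam E y d * rel q d) :=
          Finset.sum_congr rfl fun y _ => hclick q d y
      _ = (∑ y, π₀ q y * exam E y d) * rel q d := by
          rw [Finset.sum_mul]; exact Finset.sum_congr rfl fun y _ => by ring
      _ = expExposure E (π₀ q) d * rel q d := rfl
  have hvar : ∀ q, variance (μ q) (fun ω => ∑ d : {x : Doc // x ∈ D q},
        (expExposure E (π q) d / expExposure E (π₀ q) d) * ind (ω.2 d))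
      ≤ ∑ d : {x : Doc // x ∈ D q},
          (expExposure E (π q) d / expExposure E (π₀ q) d) ^ 2 * expExposure E (π₀ q) d := by
    intro q
    refine le_trans (var_sum_bound (μ q) (hμ0 q) (hμ1 q)
      (fun d => expExposure E (π q) d / expExposure E (π₀ q) d)
      (fun d ω => ω.2 d) (huncor q)) ?_
    apply Finset.sum_le_sum
    intro d _
    rw [hEind q d]
    exact mul_le_mul_of_nonneg_left
      (mul_le_of_le_one_right (hρ₀pos q d).le (hrel q d).2) (sq_nonneg _)
  rcases eq_or_lt_of_le hZ0 with hZ | hZ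
  · have hempty : ∀ q : Q, IsEmpty {x : Doc // x ∈ D q} := by
      intro q
      rw [← not_nonempty_iff]
      rintro ⟨d⟩
      have hEk : ∀ k, E k = 0 := fun k =>
        (Finset.sum_eq_zero_iff_of_nonneg (fun k _ => (hE k).1)).mp hZ.symm k (Finset.mem_univ k)
      have h0 : expExposure E (π₀ q) d = 0 := by
        unfold expExposure exam
        simp [hEk]
      linarith [hρ₀pos q d]
    have hLz : ∀ q : Q, variance (μ q) (fun ω => ∑ d : {x : Doc // x ∈ D q},
        (expExposure E (π q) d / expExposure E (π₀ q) d) * ind (ω.2 d)) = 0 := by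
      intro q
      haveI := hempty q
      simp [variance, _root_.expect]
    simp only [hLz, mul_zero, Finset.sum_const_zero]
    rw [← hZ]
    simp
  · have hZne : Z ≠ 0 := ne_of_gt hZ
    have hRHS : (Z / (N:ℝ)) * ∑ q, Pq q * ∑ d : {x : Doc // x ∈ D q},
          (expExposure E (π₀ q) d / Z) *
            ((expExposure E (π q) d / Z) / (expExposure E (π₀ q) d / Z)) ^ 2
        = (1 / (N:ℝ)) * ∑ q, Pq q * ∑ d : {x : Doc // x ∈ D q},
          (expExposure E (π q) d / expExposure E (π₀ q) d) ^ 2 * expExposure E (π₀ q) d := by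
      rw [Finset.mul_sum, Finset.mul_sum]
      apply Finset.sum_congr rfl
      intro q _
      have hinner : ∀ d : {x : Doc // x ∈ D q},
          (expExposure E (π₀ q) d / Z) *
            ((expExposure E (π q) d / Z) / (expExposure E (π₀ q) d / Z)) ^ 2
          = ((expExposure E (π q) d / expExposure E (π₀ q) d) ^ 2
              * expExposure E (π₀ q) d) / Z := by
        intro d
        have h := (hρ₀pos q d).ne'
        field_simp
      rw [Finset.sum_congr rfl (fun d _ => hinner d), ← Finset.sum_div]
      field_simp
    rw [hRHS]
    apply mul_le_mul_of_nonneg_left _ (by positivity)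
    apply Finset.sum_le_sum
    intro q _
    exact mul_le_mul_of_nonneg_left (hvar q) (hPq0 q)
end
end

section
/- The exposure-based IPS estimator is unbiased: over the randomness of the N i.i.d. logged interactions (queries from the query distribution, rankings from the logging policy π₀, and clicks from the position-based click model), E_{q,y,c}[ Û(π) ] = U(π). -/
open Finset

noncomputable section

/-- A single logged interaction: a query `q`, a displayed ranking `y` of its candidate set,
and a click vector `c` on its candidate set. -/
abbrev Interaction {Doc : Type*} (Q : Type*) (D : Q → Finset Doc) (K : ℕ) :=
  Σ q : Q, (Fin K ↪ {x : Doc // x ∈ D q}) × ({x : Doc // x ∈ D q} → Bool)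

/-- Probability of a sequence of `N` i.i.d. logged interactions: each interaction draws a
query from `Pq`, then a ranking and clicks from the per-query joint distribution `μ`. -/
def logProb {Doc : Type*} {Q : Type*} [Fintype Q] {D : Q → Finset Doc} {K N : ℕ}
    (Pq : Q → ℝ)
    (μ : ∀ q : Q, ((Fin K ↪ {x : Doc // x ∈ D q}) × ({x : Doc // x ∈ D q} → Bool)) → ℝ)
    (ω : Fin N → Interaction Q D K) : ℝ :=
  ∏ i : Fin N, Pq (ω i).1 * μ (ω i).1 (ω i).2

/-- The exposure-based IPS estimator
`Û(π) = (1/N) ∑_{i=1}^N ∑_{d∈D_{q_i}} (ρ(d)/ρ₀(d)) · c_i(d)`. -/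
def ipsEstimate {Doc : Type*} [DecidableEq Doc] {Q : Type*} {D : Q → Finset Doc} {K N : ℕ}
    (E : Fin K → ℝ)
    (π π₀ : ∀ q : Q, (Fin K ↪ {x : Doc // x ∈ D q}) → ℝ)
    (ω : Fin N → Interaction Q D K) : ℝ :=
  (1 / (N : ℝ)) * ∑ i : Fin N, ∑ d : {x : Doc // x ∈ D (ω i).1},
    (expExposure E (π (ω i).1) d / expExposure E (π₀ (ω i).1) d) * ind ((ω i).2.2 d)

/-- The true utility `U(π) = E_q[ ∑_{d∈D_q} ρ(d) · P(R=1|d,q) ]`. -/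
def trueUtility {Doc : Type*} [DecidableEq Doc] {Q : Type*} [Fintype Q] {D : Q → Finset Doc}
    {K : ℕ} (E : Fin K → ℝ) (Pq : Q → ℝ)
    (π : ∀ q : Q, (Fin K ↪ {x : Doc // x ∈ D q}) → ℝ)
    (rel : ∀ q : Q, {x : Doc // x ∈ D q} → ℝ) : ℝ :=
  ∑ q, Pq q * ∑ d : {x : Doc // x ∈ D q}, expExposure E (π q) d * rel q d


/-- Expectation of a function of one coordinate under an i.i.d. product distribution. -/
lemma expect_coord {ι σ : Type*} [Fintype ι] [DecidableEq ι] [Fintype σ]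
    (p g : σ → ℝ) (hp : ∑ s, p s = 1) (i : ι) :
    ∑ ω : ι → σ, (∏ j, p (ω j)) * g (ω i) = ∑ s, p s * g s := by
  have h1 : ∀ ω : ι → σ, (∏ j, p (ω j)) * g (ω i)
      = ∏ j, (if j = i then p (ω j) * g (ω j) else p (ω j)) := by
    intro ω
    rw [← Finset.mul_prod_erase Finset.univ
          (fun j => if j = i then p (ω j) * g (ω j) else p (ω j)) (Finset.mem_univ i),
        ← Finset.mul_prod_erase Finset.univ (fun j => p (ω j)) (Finset.mem_univ i)]
    simp only [eq_self_iff_true, if_true]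
    rw [Finset.prod_congr rfl (fun j hj => if_neg (Finset.ne_of_mem_erase hj))]
    ring
  calc ∑ ω : ι → σ, (∏ j, p (ω j)) * g (ω i)
      = ∑ ω : ι → σ, ∏ j, (if j = i then p (ω j) * g (ω j) else p (ω j)) := by
        exact Finset.sum_congr rfl fun ω _ => h1 ω
    _ = ∏ j : ι, ∑ s : σ, (if j = i then p s * g s else p s) := by
        rw [Finset.prod_univ_sum (fun _ => Finset.univ)
          (fun j s => if j = i then p s * g s else p s), Fintype.piFinset_univ]
    _ = ∑ s, p s * g s := by
        rw [← Finset.mul_prod_erase Finset.univ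
          (fun j => ∑ s : σ, if j = i then p s * g s else p s) (Finset.mem_univ i)]
        simp only [eq_self_iff_true, if_true]
        rw [Finset.prod_congr rfl (fun j hj => by
          rw [Finset.sum_congr rfl (fun s _ => if_neg (Finset.ne_of_mem_erase hj)), hp]),
          Finset.prod_const_one, mul_one]

/-- the exposure-based IPS estimator is unbiased: over the randomness of the
`N` i.i.d. logged interactions (queries from the query distribution, rankings from the
logging policy `π₀`, and clicks from the position-based click model),
`E_{q,y,c}[ Û(π) ] = U(π)`. -/
theorem ips_unbiased
    {Doc : Type*} [DecidableEq Doc]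
    {Q : Type*} [Fintype Q] [DecidableEq Q]
    -- distribution over queries
    (Pq : Q → ℝ) (hPq0 : ∀ q, 0 ≤ Pq q) (hPq1 : ∑ q, Pq q = 1)
    -- candidate document sets and examination probabilities
    (D : Q → Finset Doc) (K : ℕ)
    (E : Fin K → ℝ) (hE : ∀ k, 0 ≤ E k ∧ E k ≤ 1)
    (rel : ∀ q : Q, {x : Doc // x ∈ D q} → ℝ)
    (hrel : ∀ q d, 0 ≤ rel q d ∧ rel q d ≤ 1)
    -- the new policy and the logging policy
    (π π₀ : ∀ q : Q, (Fin K ↪ {x : Doc // x ∈ D q}) → ℝ)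
    (hπ0 : ∀ q y, 0 ≤ π q y) (hπ1 : ∀ q, ∑ y, π q y = 1)
    (hπ₀0 : ∀ q y, 0 ≤ π₀ q y) (hπ₀1 : ∀ q, ∑ y, π₀ q y = 1)
    -- strictly positive logging exposure
    (hρ₀pos : ∀ q d, 0 < expExposure E (π₀ q) d)
    -- per-query joint distribution of the displayed ranking and the clicks
    (μ : ∀ q : Q, ((Fin K ↪ {x : Doc // x ∈ D q}) × ({x : Doc // x ∈ D q} → Bool)) → ℝ)
    (hμ0 : ∀ q ω, 0 ≤ μ q ω)
    -- the ranking-marginal of the joint distribution is the logging policy `π₀`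
    (hmarg : ∀ q y, ∑ c : {x : Doc // x ∈ D q} → Bool, μ q (y, c) = π₀ q y)
    -- position-based click model: conditionally on the displayed ranking `y`, document `d`
    -- is clicked with probability `P(E=1|rank(d|y)) · P(R=1|d,q)`
    (hclick : ∀ q d y, ∑ c : {x : Doc // x ∈ D q} → Bool, μ q (y, c) * ind (c d)
        = π₀ q y * (exam E y d * rel q d))
    -- number of logged interactions
    (N : ℕ) (hN : 1 ≤ N) :
    ∑ ω : Fin N → Interaction Q D K,
        logProb Pq μ ω * ipsEstimate E π π₀ ω
      = trueUtility E Pq π rel := by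
  classical
  set p : Interaction Q D K → ℝ := fun s => Pq s.1 * μ s.1 s.2 with hpdef
  set g : Interaction Q D K → ℝ := fun s => ∑ d : {x : Doc // x ∈ D s.1},
      (expExposure E (π s.1) d / expExposure E (π₀ s.1) d) * ind (s.2.2 d) with hgdef
  -- total probability is 1
  have hμtot : ∀ q : Q,
      (∑ z : (Fin K ↪ {x : Doc // x ∈ D q}) × ({x : Doc // x ∈ D q} → Bool), μ q z) = 1 := by
    intro q
    rw [Fintype.sum_prod_type]
    calc (∑ y, ∑ c, μ q (y, c)) = ∑ y, π₀ q y := by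
          exact Finset.sum_congr rfl fun y _ => hmarg q y
      _ = 1 := hπ₀1 q
  have hp : ∑ s, p s = 1 := by
    rw [← Finset.univ_sigma_univ, Finset.sum_sigma]
    calc (∑ q, ∑ z, p ⟨q, z⟩) = ∑ q, Pq q := by
          refine Finset.sum_congr rfl fun q _ => ?_
          simp only [hpdef]
          rw [← Finset.mul_sum, hμtot q, mul_one]
      _ = 1 := hPq1
  -- per-interaction expectation equals the true utility
  have hsingle : ∑ s, p s * g s = trueUtility E Pq π rel := by
    rw [← Finset.univ_sigma_univ, Finset.sum_sigma]
    unfold trueUtility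
    refine Finset.sum_congr rfl fun q _ => ?_
    have : (∑ z, p ⟨q, z⟩ * g ⟨q, z⟩)
        = Pq q * ∑ z : (Fin K ↪ {x : Doc // x ∈ D q}) × ({x : Doc // x ∈ D q} → Bool),
            μ q z * ∑ d, (expExposure E (π q) d / expExposure E (π₀ q) d) * ind (z.2 d) := by
      rw [Finset.mul_sum]
      exact Finset.sum_congr rfl fun z _ => by simp only [hpdef, hgdef]; ring
    rw [this]
    congr 1
    rw [Fintype.sum_prod_type]
    have hswap : (∑ y, ∑ c, μ q (y, c) *
          ∑ d, (expExposure E (π q) d / expExposure E (π₀ q) d) * ind (c d))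
        = ∑ d : {x : Doc // x ∈ D q}, ∑ y, ∑ c, μ q (y, c) *
            ((expExposure E (π q) d / expExposure E (π₀ q) d) * ind (c d)) := by
      calc (∑ y, ∑ c, μ q (y, c) *
              ∑ d, (expExposure E (π q) d / expExposure E (π₀ q) d) * ind (c d))
          = ∑ y, ∑ c, ∑ d : {x : Doc // x ∈ D q}, μ q (y, c) *
              ((expExposure E (π q) d / expExposure E (π₀ q) d) * ind (c d)) := by
            refine Finset.sum_congr rfl fun y _ => Finset.sum_congr rfl fun c _ => ?_
            rw [Finset.mul_sum]
        _ = ∑ y, ∑ d : {x : Doc // x ∈ D q}, ∑ c, μ q (y, c) *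
              ((expExposure E (π q) d / expExposure E (π₀ q) d) * ind (c d)) :=
            Finset.sum_congr rfl fun y _ => Finset.sum_comm
        _ = ∑ d : {x : Doc // x ∈ D q}, ∑ y, ∑ c, μ q (y, c) *
              ((expExposure E (π q) d / expExposure E (π₀ q) d) * ind (c d)) :=
            Finset.sum_comm
    rw [hswap]
    refine Finset.sum_congr rfl fun d _ => ?_
    have hinner : ∀ y, (∑ c, μ q (y, c) *
          ((expExposure E (π q) d / expExposure E (π₀ q) d) * ind (c d)))
        = (expExposure E (π q) d / expExposure E (π₀ q) d) *
            (π₀ q y * (exam E y d * rel q d)) := by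
      intro y
      rw [← hclick q d y, Finset.mul_sum]
      exact Finset.sum_congr rfl fun c _ => by ring
    calc (∑ y, ∑ c, μ q (y, c) *
            ((expExposure E (π q) d / expExposure E (π₀ q) d) * ind (c d)))
        = ∑ y, (expExposure E (π q) d / expExposure E (π₀ q) d) *
            (π₀ q y * (exam E y d * rel q d)) :=
          Finset.sum_congr rfl fun y _ => hinner y
      _ = (∑ y, π₀ q y * exam E y d) *
            ((expExposure E (π q) d / expExposure E (π₀ q) d) * rel q d) := by
          rw [Finset.sum_mul]
          exact Finset.sum_congr rfl fun y _ => by ring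
      _ = (expExposure E (π q) d / expExposure E (π₀ q) d) *
            (expExposure E (π₀ q) d * rel q d) := by
          rw [show (∑ y, π₀ q y * exam E y d) = expExposure E (π₀ q) d from rfl]
          ring
      _ = expExposure E (π q) d * rel q d := by
          rw [div_mul_eq_mul_div, mul_comm (expExposure E (π₀ q) d) (rel q d),
            ← mul_assoc, mul_div_assoc,
            div_self (ne_of_gt (hρ₀pos q d)), mul_one]
  -- put everything together
  calc ∑ ω : Fin N → Interaction Q D K, logProb Pq μ ω * ipsEstimate E π π₀ ω
      = ∑ ω : Fin N → Interaction Q D K, ∑ i : Fin N,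
          (1 / (N : ℝ)) * ((∏ j, p (ω j)) * g (ω i)) := by
        refine Finset.sum_congr rfl fun ω _ => ?_
        unfold logProb ipsEstimate
        rw [mul_comm (1 / (N : ℝ)), Finset.sum_mul, Finset.mul_sum]
        exact Finset.sum_congr rfl fun i _ => by simp only [hpdef, hgdef]; ring
    _ = ∑ i : Fin N, ∑ ω : Fin N → Interaction Q D K,
          (1 / (N : ℝ)) * ((∏ j, p (ω j)) * g (ω i)) := Finset.sum_comm
    _ = ∑ i : Fin N, (1 / (N : ℝ)) * ∑ s, p s * g s := by
        refine Finset.sum_congr rfl fun i _ => ?_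
        rw [← Finset.mul_sum, expect_coord p g hp i]
    _ = trueUtility E Pq π rel := by
        have hNne : (N : ℝ) ≠ 0 := Nat.cast_ne_zero.mpr (by omega)
        rw [Finset.sum_const, Finset.card_univ, Fintype.card_fin, nsmul_eq_mul, ← mul_assoc,
          one_div, mul_inv_cancel₀ hNne, one_mul, hsingle]
end
end

section
/- The exposure-based IPS estimator is consistent: for an infinite i.i.d. sequence of logged interactions (q_i, y_i, c_i) generated by the logging policy π₀ and the position-based click model, the estimator Û_N(π) = (1/N) Σ_{i=1}^N Σ_{d∈D_{q_i}} (ρ(d)/ρ₀(d)) · c_i(d) converges almost surely to U(π) as N → ∞. -/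
open Finset

noncomputable section

/-- The per-interaction exposure-based IPS term
`∑_{d∈D_{q_i}} (ρ(d)/ρ₀(d)) · c_i(d)` of a single logged interaction. -/
def ipsTerm {Doc : Type*} [DecidableEq Doc] {Q : Type*} {D : Q → Finset Doc} {K : ℕ}
    (E : Fin K → ℝ)
    (π π₀ : ∀ q : Q, (Fin K ↪ {x : Doc // x ∈ D q}) → ℝ)
    (x : Interaction Q D K) : ℝ :=
  ∑ d : {x' : Doc // x' ∈ D x.1},
    (expExposure E (π x.1) d / expExposure E (π₀ x.1) d) * ind (x.2.2 d)

/-- Interactions form a finite type; we endow it with the discrete σ-algebra. -/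
instance {Doc : Type*} {Q : Type*} (D : Q → Finset Doc) (K : ℕ) :
    MeasurableSpace (Interaction Q D K) := ⊤

open MeasureTheory ProbabilityTheory Filter

/-! The logged clicks are unbiased for exposure times relevance: under the position-based model,
the probability that `d` is clicked under `π₀` is `ρ₀(d) · P(R=1|d,q)`. Reweighting each click
by `ρ(d)/ρ₀(d)` therefore makes the expected IPS term of one interaction equal to `U(π)`. The
interactions take values in a finite type, so the IPS terms are bounded i.i.d. real random
variables, and the strong law of large numbers gives almost sure convergence of their average. -/

instance {Doc : Type*} {Q : Type*} (D : Q → Finset Doc) (K : ℕ) :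
    DiscreteMeasurableSpace (Interaction Q D K) :=
  ⟨fun _ => MeasurableSpace.measurableSet_top⟩

section FiniteValued

variable {α Ω : Type*} [MeasurableSpace α] [MeasurableSingletonClass α]
  [MeasurableSpace Ω] {P : Measure Ω}

theorem identDistrib_of_measure_preimage_singleton [Countable α] {X Y : Ω → α}
    (hX : Measurable X) (hY : Measurable Y) (h : ∀ x, P (X ⁻¹' {x}) = P (Y ⁻¹' {x})) :
    IdentDistrib X Y P P where
  aemeasurable_fst := hX.aemeasurable
  aemeasurable_snd := hY.aemeasurable
  map_eq := Measure.ext_of_singleton fun x => by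
    rw [Measure.map_apply hX (measurableSet_singleton x),
      Measure.map_apply hY (measurableSet_singleton x), h]

theorem integral_comp_eq_sum_measureReal_preimage [Fintype α] [IsFiniteMeasure P]
    {X : Ω → α} (hX : Measurable X) (f : α → ℝ) :
    ∫ ω, f (X ω) ∂P = ∑ x, P.real (X ⁻¹' {x}) * f x := by
  rw [← integral_map hX.aemeasurable (Measurable.of_discrete).aestronglyMeasurable,
    integral_fintype .of_finite]
  simp only [map_measureReal_apply hX (measurableSet_singleton _), smul_eq_mul]

theorem strong_law_ae_comp_of_finite [Finite α] [IsFiniteMeasure P] {X : ℕ → Ω → α}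
    (hX : ∀ i, Measurable (X i)) (hindep : Pairwise fun i j => X i ⟂ᵢ[P] X j)
    (hident : ∀ i, IdentDistrib (X i) (X 0) P P) (f : α → ℝ) :
    ∀ᵐ ω ∂P, Tendsto (fun n : ℕ => (∑ i ∈ range n, f (X i ω)) / n) atTop
      (nhds (∫ ω, f (X 0 ω) ∂P)) := by
  have hf : Measurable f := .of_discrete
  have hint : Integrable (f ∘ X 0) P :=
    (integrable_map_measure hf.aestronglyMeasurable (hX 0).aemeasurable).mp .of_finite
  exact strong_law_ae_real (fun i => f ∘ X i) hint
    (fun i j hij => (hindep hij).comp hf hf) (fun i => (hident i).comp hf)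

end FiniteValued

section Unbiasedness

variable {Doc : Type*} [DecidableEq Doc] {K : ℕ}

theorem sum_mul_ind_eq_expExposure_mul {Dq : Finset Doc} {E : Fin K → ℝ}
    {π₀ : (Fin K ↪ {x : Doc // x ∈ Dq}) → ℝ} {rel : {x : Doc // x ∈ Dq} → ℝ}
    {d : {x : Doc // x ∈ Dq}}
    {μ : (Fin K ↪ {x : Doc // x ∈ Dq}) × ({x : Doc // x ∈ Dq} → Bool) → ℝ}
    (hclick : ∀ y, ∑ c, μ (y, c) * ind (c d) = π₀ y * (exam E y d * rel d)) :
    ∑ yc, μ yc * ind (yc.2 d) = expExposure E π₀ d * rel d := by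
  simp only [Fintype.sum_prod_type, hclick, expExposure, Finset.sum_mul, mul_assoc]

variable {Q : Type*} {D : Q → Finset Doc} {E : Fin K → ℝ}
  {π π₀ : ∀ q : Q, (Fin K ↪ {x : Doc // x ∈ D q}) → ℝ}
  {rel : ∀ q : Q, {x : Doc // x ∈ D q} → ℝ}
  {μ : ∀ q : Q, ((Fin K ↪ {x : Doc // x ∈ D q}) × ({x : Doc // x ∈ D q} → Bool)) → ℝ}

theorem sum_mul_ipsTerm_eq_sum_expExposure_mul (q : Q)
    (hclick : ∀ d y, ∑ c, μ q (y, c) * ind (c d) = π₀ q y * (exam E y d * rel q d))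
    (hρ₀ : ∀ d, expExposure E (π₀ q) d ≠ 0) :
    ∑ yc, μ q yc * ipsTerm E π π₀ ⟨q, yc⟩ = ∑ d, expExposure E (π q) d * rel q d := by
  set w : {x : Doc // x ∈ D q} → ℝ := fun d => expExposure E (π q) d / expExposure E (π₀ q) d
  have hterm : ∀ yc, ipsTerm E π π₀ ⟨q, yc⟩ = ∑ d, w d * ind (yc.2 d) := fun _ => rfl
  calc ∑ yc, μ q yc * ipsTerm E π π₀ ⟨q, yc⟩
      = ∑ yc, ∑ d, w d * (μ q yc * ind (yc.2 d)) := by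
        simp only [hterm, Finset.mul_sum, mul_left_comm]
    _ = ∑ d, w d * ∑ yc, μ q yc * ind (yc.2 d) := by
        rw [Finset.sum_comm]; simp only [Finset.mul_sum]
    _ = ∑ d, expExposure E (π q) d * rel q d := by
        refine Finset.sum_congr rfl fun d _ => ?_
        rw [sum_mul_ind_eq_expExposure_mul (hclick d), ← mul_assoc, div_mul_cancel₀ _ (hρ₀ d)]

theorem sum_mul_ipsTerm_eq_trueUtility [Fintype Q] (Pq : Q → ℝ)
    (hclick : ∀ q d y, ∑ c, μ q (y, c) * ind (c d) = π₀ q y * (exam E y d * rel q d))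
    (hρ₀ : ∀ q d, expExposure E (π₀ q) d ≠ 0) :
    ∑ x : Interaction Q D K, Pq x.1 * μ x.1 x.2 * ipsTerm E π π₀ x = trueUtility E Pq π rel := by
  simp only [Fintype.sum_sigma, mul_assoc, ← Finset.mul_sum, trueUtility,
    sum_mul_ipsTerm_eq_sum_expExposure_mul _ (hclick _) (hρ₀ _)]

end Unbiasedness

theorem ips_consistent_general
    {Doc : Type*} [DecidableEq Doc]
    {Q : Type*} [Fintype Q]
    -- distribution over queries
    (Pq : Q → ℝ) (hPq0 : ∀ q, 0 ≤ Pq q)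
    -- candidate document sets and examination probabilities
    (D : Q → Finset Doc) (K : ℕ)
    (E : Fin K → ℝ)
    (rel : ∀ q : Q, {x : Doc // x ∈ D q} → ℝ)
    -- the new policy and the logging policy
    (π π₀ : ∀ q : Q, (Fin K ↪ {x : Doc // x ∈ D q}) → ℝ)
    -- strictly positive logging exposure
    (hρ₀pos : ∀ q d, 0 < expExposure E (π₀ q) d)
    -- per-query joint distribution of the displayed ranking and the clicks
    (μ : ∀ q : Q, ((Fin K ↪ {x : Doc // x ∈ D q}) × ({x : Doc // x ∈ D q} → Bool)) → ℝ)
    (hμ0 : ∀ q ω, 0 ≤ μ q ω)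
    -- position-based click model: conditionally on the displayed ranking `y`, document `d`
    -- is clicked with probability `P(E=1|rank(d|y)) · P(R=1|d,q)`
    (hclick : ∀ q d y, ∑ c : {x : Doc // x ∈ D q} → Bool, μ q (y, c) * ind (c d)
        = π₀ q y * (exam E y d * rel q d))
    -- the underlying probability space and the infinite i.i.d. interaction sequence
    {Ω : Type*} [MeasurableSpace Ω] (P : Measure Ω) [IsProbabilityMeasure P]
    (X : ℕ → Ω → Interaction Q D K)
    (hmeas : ∀ i, Measurable (X i))
    -- the interactions are independent …
    (hindep : iIndepFun X P)
    -- … and identically distributed: each interaction picks a query from the query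
    -- distribution, and then a ranking `y ∼ π₀(·|q)` together with clicks from the
    -- position-based click model (jointly given by `μ q`)
    (hdist : ∀ i, ∀ x : Interaction Q D K,
        P (X i ⁻¹' {x}) = ENNReal.ofReal (Pq x.1 * μ x.1 x.2)) :
    ∀ᵐ ω ∂P, Tendsto
      (fun N : ℕ => (1 / (N : ℝ)) * ∑ i ∈ Finset.range N, ipsTerm E π π₀ (X i ω))
      atTop (nhds (trueUtility E Pq π rel)) := by
  have hident : ∀ i, IdentDistrib (X i) (X 0) P P := fun i =>
    identDistrib_of_measure_preimage_singleton (hmeas i) (hmeas 0) fun x => by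
      rw [hdist, hdist]
  have hmean : ∫ ω, ipsTerm E π π₀ (X 0 ω) ∂P = trueUtility E Pq π rel := by
    rw [integral_comp_eq_sum_measureReal_preimage (hmeas 0),
      ← sum_mul_ipsTerm_eq_trueUtility Pq hclick fun q d => (hρ₀pos q d).ne']
    refine Finset.sum_congr rfl fun x _ => ?_
    rw [measureReal_def, hdist, ENNReal.toReal_ofReal (mul_nonneg (hPq0 _) (hμ0 _ _))]
  filter_upwards [strong_law_ae_comp_of_finite hmeas (fun i j hij => hindep.indepFun hij) hident
    (ipsTerm E π π₀)] with ω hω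
  simpa only [hmean, one_div, inv_mul_eq_div] using hω

/-- the exposure-based IPS estimator is consistent: for an infinite i.i.d.
sequence of logged interactions `(q_i, y_i, c_i)` generated by the logging policy `π₀` and
the position-based click model, the estimator
`Û_N(π) = (1/N) ∑_{i=1}^N ∑_{d∈D_{q_i}} (ρ(d)/ρ₀(d))·c_i(d)`
converges almost surely to `U(π)` as `N → ∞`. -/
theorem ips_consistent
    {Doc : Type*} [DecidableEq Doc]
    {Q : Type*} [Fintype Q] [DecidableEq Q]
    -- distribution over queries
    (Pq : Q → ℝ) (hPq0 : ∀ q, 0 ≤ Pq q) (hPq1 : ∑ q, Pq q = 1)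
    -- candidate document sets and examination probabilities
    (D : Q → Finset Doc) (K : ℕ)
    (E : Fin K → ℝ) (hE : ∀ k, 0 ≤ E k ∧ E k ≤ 1)
    (rel : ∀ q : Q, {x : Doc // x ∈ D q} → ℝ)
    (hrel : ∀ q d, 0 ≤ rel q d ∧ rel q d ≤ 1)
    -- the new policy and the logging policy
    (π π₀ : ∀ q : Q, (Fin K ↪ {x : Doc // x ∈ D q}) → ℝ)
    (hπ0 : ∀ q y, 0 ≤ π q y) (hπ1 : ∀ q, ∑ y, π q y = 1)
    (hπ₀0 : ∀ q y, 0 ≤ π₀ q y) (hπ₀1 : ∀ q, ∑ y, π₀ q y = 1)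
    -- strictly positive logging exposure
    (hρ₀pos : ∀ q d, 0 < expExposure E (π₀ q) d)
    -- per-query joint distribution of the displayed ranking and the clicks
    (μ : ∀ q : Q, ((Fin K ↪ {x : Doc // x ∈ D q}) × ({x : Doc // x ∈ D q} → Bool)) → ℝ)
    (hμ0 : ∀ q ω, 0 ≤ μ q ω)
    -- the ranking-marginal of the joint distribution is the logging policy `π₀`
    (hmarg : ∀ q y, ∑ c : {x : Doc // x ∈ D q} → Bool, μ q (y, c) = π₀ q y)
    -- position-based click model: conditionally on the displayed ranking `y`, document `d`
    -- is clicked with probability `P(E=1|rank(d|y)) · P(R=1|d,q)`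
    (hclick : ∀ q d y, ∑ c : {x : Doc // x ∈ D q} → Bool, μ q (y, c) * ind (c d)
        = π₀ q y * (exam E y d * rel q d))
    -- the underlying probability space and the infinite i.i.d. interaction sequence
    {Ω : Type*} [MeasurableSpace Ω] (P : Measure Ω) [IsProbabilityMeasure P]
    (X : ℕ → Ω → Interaction Q D K)
    (hmeas : ∀ i, Measurable (X i))
    -- the interactions are independent …
    (hindep : iIndepFun X P)
    -- … and identically distributed: each interaction picks a query from the query
    -- distribution, and then a ranking `y ∼ π₀(·|q)` together with clicks from the
    -- position-based click model (jointly given by `μ q`)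
    (hdist : ∀ i, ∀ x : Interaction Q D K,
        P (X i ⁻¹' {x}) = ENNReal.ofReal (Pq x.1 * μ x.1 x.2)) :
    ∀ᵐ ω ∂P, Tendsto
      (fun N : ℕ => (1 / (N : ℝ)) * ∑ i ∈ Finset.range N, ipsTerm E π π₀ (X i ω))
      atTop (nhds (trueUtility E Pq π rel)) :=
  ips_consistent_general Pq hPq0 D K E rel π π₀ hρ₀pos μ hμ0 hclick P X hmeas hindep hdist
end
end
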